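/- Let B be a q×q symmetric matrix with strictly positive entries, let c ∈ ℝ^q have strictly positive entries, and let v*_∅ be the unique minimizer (with strictly positive entries) of the infimum defining λ_∅. If λ_max(diag(c)^{1/2} B diag(c)^{1/2} − diag(v*_∅)^{-1}) = 0, then v*_∅ = 1_q. -/

import Mathlib

open MeasureTheory ProbabilityTheory Matrix

noncomputable section

/-- squared ℓ² norm of a real vector -/
def nsqR {q : ℕ} (v : Fin q → ℝ) : ℝ := ∑ i, v i ^ 2

/-- Rayleigh quotient ⟨v, M v⟩ of a real matrix at a vector -/
def rayR {q : ℕ} (M : Matrix (Fin q) (Fin q) ℝ) (v : Fin q → ℝ) : ℝ := v ⬝ᵥ M.mulVec v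

/-- largest eigenvalue of a real symmetric matrix, characterized as the supremum of the
Rayleigh quotient over ℓ²-unit vectors -/
def lmaxR {q : ℕ} (M : Matrix (Fin q) (Fin q) ℝ) : ℝ :=
  sSup {x | ∃ v, nsqR v = 1 ∧ x = rayR M v}

/-- the quantity λ = inf_{v > 0} max{λ_max(diag(c)^{1/2} B diag(c)^{1/2} +
diag(B diag(c)(v - 1))), λ_max(diag(v)⁻¹ + diag(B diag(c)(v - 1)))} -/
def lamVal {q : ℕ} (B : Matrix (Fin q) (Fin q) ℝ) (c : Fin q → ℝ) : ℝ :=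
  sInf {x | ∃ v : Fin q → ℝ, (∀ k, 0 < v k) ∧
    x = max
      (lmaxR (Matrix.diagonal (fun k => Real.sqrt (c k)) * B *
          Matrix.diagonal (fun k => Real.sqrt (c k)) +
        Matrix.diagonal ((B * Matrix.diagonal c).mulVec (v - 1))))
      (lmaxR (Matrix.diagonal (fun k => (v k)⁻¹) +
        Matrix.diagonal ((B * Matrix.diagonal c).mulVec (v - 1))))}

/-- the quantity λ_∅ = inf_{v > 0} λ_max(diag(v)⁻¹ + diag(B diag(c)(v - 1))) -/
def lamNull {q : ℕ} (B : Matrix (Fin q) (Fin q) ℝ) (c : Fin q → ℝ) : ℝ :=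
  sInf {x | ∃ v : Fin q → ℝ, (∀ k, 0 < v k) ∧
    x = lmaxR (Matrix.diagonal (fun k => (v k)⁻¹) +
      Matrix.diagonal ((B * Matrix.diagonal c).mulVec (v - 1)))}

/-!
At a minimizer `v` all diagonal entries `v_k⁻¹ + (B diag(c) (v - 1))_k` are equal to `λ_∅`
(if one were smaller, lowering that coordinate of `v` would decrease every other entry).
For `A = diag(√c) B diag(√c) - diag(v)⁻¹` and `x = √c ⊙ (v - 1)` this gives
`A x = (λ_∅ - 1) √c`. As `A` is symmetric with positive off-diagonal entries and
`λ_max(A) = 0`, Cauchy–Schwarz for the form `-A` rules out a nonzero multiple of the positive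
vector `√c` in the range of `A`, so `λ_∅ = 1`. The midpoint of `v` and `1` is then again a
minimizer, and by strict convexity of `t ↦ t⁻¹` its entries can all be equal only if `v = 1`.
-/

open Finset

section Rayleigh

variable {q : ℕ} (M : Matrix (Fin q) (Fin q) ℝ)

lemma nsqR_eq_dotProduct (y : Fin q → ℝ) : nsqR y = y ⬝ᵥ y := by
  simp [nsqR, dotProduct, sq]

lemma nsqR_single (k : Fin q) : nsqR (Pi.single k 1) = 1 := by
  simp [nsqR, Pi.single_apply]

lemma nsqR_abs (y : Fin q → ℝ) : nsqR (fun k => |y k|) = nsqR y := by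
  simp [nsqR, sq_abs]

lemma nsqR_smul (t : ℝ) (y : Fin q → ℝ) : nsqR (t • y) = t ^ 2 * nsqR y := by
  simp only [nsqR, Pi.smul_apply, smul_eq_mul, Finset.mul_sum, mul_pow]

lemma rayR_eq_sum (x : Fin q → ℝ) : rayR M x = ∑ k, ∑ l, x k * M k l * x l := by
  simp [rayR, dotProduct, mulVec, Finset.mul_sum, mul_assoc]

lemma rayR_smul (t : ℝ) (y : Fin q → ℝ) : rayR M (t • y) = t ^ 2 * rayR M y := by
  simp only [rayR, mulVec_smul, smul_dotProduct, dotProduct_smul, smul_eq_mul]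
  ring

lemma rayR_diagonal (w y : Fin q → ℝ) : rayR (diagonal w) y = ∑ k, w k * y k ^ 2 := by
  simp only [rayR, mulVec_diagonal, dotProduct]
  exact Finset.sum_congr rfl fun k _ => by ring

lemma rayR_add_of_isSymm {M : Matrix (Fin q) (Fin q) ℝ} (hM : M.IsSymm) (x y : Fin q → ℝ) :
    rayR M (x + y) = rayR M x + 2 * (x ⬝ᵥ M *ᵥ y) + rayR M y := by
  have hcross : y ⬝ᵥ M *ᵥ x = x ⬝ᵥ M *ᵥ y := by
    rw [dotProduct_mulVec, ← mulVec_transpose, hM.eq, dotProduct_comm]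
  simp only [rayR, mulVec_add, dotProduct_add, add_dotProduct, hcross]
  ring

lemma bddAbove_rayR : BddAbove {x | ∃ v, nsqR v = 1 ∧ x = rayR M v} := by
  refine ⟨∑ k, ∑ l, |M k l|, ?_⟩
  rintro x ⟨y, hy, rfl⟩
  have hy1 : ∀ i, |y i| ≤ 1 := fun i => (sq_le_one_iff_abs_le_one _).mp <|
    hy ▸ Finset.single_le_sum (f := fun i => y i ^ 2) (fun j _ => sq_nonneg _) (mem_univ i)
  rw [rayR_eq_sum]
  refine Finset.sum_le_sum fun k _ => Finset.sum_le_sum fun l _ => ?_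
  calc y k * M k l * y l ≤ |y k| * |M k l| * |y l| := by
        rw [← abs_mul, ← abs_mul]; exact le_abs_self _
    _ ≤ 1 * |M k l| * 1 := by gcongr <;> exact hy1 _
    _ = |M k l| := by ring

lemma rayR_le_lmaxR {y : Fin q → ℝ} (hy : nsqR y = 1) : rayR M y ≤ lmaxR M :=
  le_csSup (bddAbove_rayR M) ⟨y, hy, rfl⟩

lemma lmaxR_le [NeZero q] {C : ℝ} (h : ∀ y, nsqR y = 1 → rayR M y ≤ C) : lmaxR M ≤ C :=
  csSup_le ⟨_, _, nsqR_single 0, rfl⟩ fun _ ⟨y, hy, hx⟩ => hx ▸ h y hy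

lemma lmaxR_diagonal [NeZero q] (w : Fin q → ℝ) :
    lmaxR (diagonal w) = univ.sup' univ_nonempty w := by
  apply le_antisymm
  · refine lmaxR_le _ fun y hy => ?_
    calc rayR (diagonal w) y = ∑ k, w k * y k ^ 2 := rayR_diagonal w y
      _ ≤ ∑ k, univ.sup' univ_nonempty w * y k ^ 2 := by
          gcongr with k; exact le_sup' w (mem_univ k)
      _ = univ.sup' univ_nonempty w := by rw [← Finset.mul_sum, ← nsqR, hy, mul_one]
  · obtain ⟨k, -, hk⟩ := exists_mem_eq_sup' univ_nonempty w
    have := rayR_le_lmaxR (diagonal w) (nsqR_single k)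
    simpa [hk, rayR_diagonal, Pi.single_apply] using this

lemma rayR_nonpos_of_lmaxR_nonpos {M : Matrix (Fin q) (Fin q) ℝ} (h : lmaxR M ≤ 0)
    (y : Fin q → ℝ) : rayR M y ≤ 0 := by
  rcases eq_or_ne y 0 with rfl | hy
  · simp [rayR]
  have hpos : 0 < nsqR y := by
    rw [nsqR_eq_dotProduct]
    exact lt_of_le_of_ne (dotProduct_self_star_nonneg y)
      (Ne.symm (dotProduct_self_eq_zero.not.mpr hy))
  set r := Real.sqrt (nsqR y)
  have hr : 0 < r := Real.sqrt_pos.mpr hpos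
  have hunit : nsqR (r⁻¹ • y) = 1 := by
    rw [nsqR_smul, inv_pow, Real.sq_sqrt hpos.le, inv_mul_cancel₀ hpos.ne']
  have := (rayR_le_lmaxR M hunit).trans h
  rw [rayR_smul] at this
  exact nonpos_of_mul_nonpos_right this (by positivity)

end Rayleigh

section Metzler

variable {q : ℕ} {M : Matrix (Fin q) (Fin q) ℝ}

lemma rayR_le_rayR_abs (hoff : ∀ k l, k ≠ l → 0 ≤ M k l) (y : Fin q → ℝ) :
    rayR M y ≤ rayR M (fun k => |y k|) := by
  simp only [rayR_eq_sum]
  refine Finset.sum_le_sum fun k _ => Finset.sum_le_sum fun l _ => ?_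
  rcases eq_or_ne k l with rfl | hkl
  · rw [mul_right_comm, mul_right_comm |y k|, abs_mul_abs_self]
  · calc y k * M k l * y l ≤ |y k * M k l * y l| := le_abs_self _
      _ = |y k| * M k l * |y l| := by rw [abs_mul, abs_mul, abs_of_nonneg (hoff k l hkl)]

lemma sq_dotProduct_mulVec_le_of_isSymm (hM : M.IsSymm) (hneg : ∀ z, rayR M z ≤ 0)
    (x y : Fin q → ℝ) : (y ⬝ᵥ M *ᵥ x) ^ 2 ≤ rayR M x * rayR M y := by
  have hquad : ∀ s : ℝ,
      0 ≤ -rayR M x * (s * s) + -(2 * (y ⬝ᵥ M *ᵥ x)) * s + -rayR M y := by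
    intro s
    have h := hneg (y + s • x)
    rw [rayR_add_of_isSymm hM, rayR_smul, mulVec_smul, dotProduct_smul, smul_eq_mul] at h
    nlinarith
  have := discrim_le_zero hquad
  rw [discrim] at this
  nlinarith

lemma le_dotProduct_of_nsqR_eq_one {y s : Fin q → ℝ} {m : ℝ} (hy : ∀ k, 0 ≤ y k)
    (hn : nsqR y = 1) (hm : 0 ≤ m) (hs : ∀ k, m ≤ s k) : m ≤ y ⬝ᵥ s := by
  have h1 : 1 ≤ ∑ k, y k := by
    have := Finset.sum_sq_le_sq_sum_of_nonneg (s := univ) fun k _ => hy k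
    rw [← nsqR, hn] at this
    nlinarith [Finset.sum_nonneg fun k (_ : k ∈ univ) => hy k]
  calc m ≤ m * ∑ k, y k := le_mul_of_one_le_right hm h1
    _ = ∑ k, y k * m := by rw [Finset.mul_sum]; exact Finset.sum_congr rfl fun k _ => mul_comm _ _
    _ ≤ y ⬝ᵥ s := Finset.sum_le_sum fun k _ => mul_le_mul_of_nonneg_left (hs k) (hy k)

/-- If `t ≠ 0`, Cauchy–Schwarz for the form `-M`, applied to `x` and `|y|` (for which
`|y| ⬝ᵥ s ≥ min s`), gives `rayR M y ≤ (t * min s) ^ 2 / rayR M x < 0` for every unit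
vector `y`. -/
theorem eq_zero_of_mulVec_eq_smul_of_lmaxR_eq_zero [NeZero q] (hM : M.IsSymm)
    (hoff : ∀ k l, k ≠ l → 0 ≤ M k l) (h0 : lmaxR M = 0) {s x : Fin q → ℝ}
    (hs : ∀ k, 0 < s k) {t : ℝ} (hx : M *ᵥ x = t • s) : t = 0 := by
  have hneg := rayR_nonpos_of_lmaxR_nonpos h0.le
  obtain ⟨k₀, -, hk₀⟩ := exists_min_image univ s univ_nonempty
  have hkey : ∀ y, nsqR y = 1 → (t * s k₀) ^ 2 ≤ rayR M x * rayR M y := by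
    intro y hy
    have hdot : s k₀ ≤ (fun k => |y k|) ⬝ᵥ s :=
      le_dotProduct_of_nsqR_eq_one (fun k => abs_nonneg _) ((nsqR_abs y).trans hy)
        (hs k₀).le fun k => hk₀ k (mem_univ k)
    have hcs := sq_dotProduct_mulVec_le_of_isSymm hM hneg x (fun k => |y k|)
    rw [hx, dotProduct_smul, smul_eq_mul] at hcs
    calc (t * s k₀) ^ 2 ≤ (t * ((fun k => |y k|) ⬝ᵥ s)) ^ 2 := by
          rw [mul_pow, mul_pow]; gcongr; exact (hs k₀).le
      _ ≤ rayR M x * rayR M (fun k => |y k|) := hcs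
      _ ≤ rayR M x * rayR M y := mul_le_mul_of_nonpos_left (rayR_le_rayR_abs hoff y) (hneg x)
  by_contra ht
  have hpos : 0 < (t * s k₀) ^ 2 := by have := hs k₀; positivity
  have hx0 : rayR M x < 0 := by
    have := hkey _ (nsqR_single k₀)
    nlinarith [hneg x, hneg (Pi.single k₀ 1)]
  have : lmaxR M ≤ (t * s k₀) ^ 2 / rayR M x :=
    lmaxR_le M fun y hy => by rw [le_div_iff_of_neg hx0]; linarith [hkey y hy]
  have : (t * s k₀) ^ 2 / rayR M x < 0 := div_neg_of_pos_of_neg hpos hx0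
  linarith

end Metzler

section NullObjective

variable {q : ℕ} (B : Matrix (Fin q) (Fin q) ℝ) (c : Fin q → ℝ)

def nullDiag (w : Fin q → ℝ) (k : Fin q) : ℝ :=
  (w k)⁻¹ + ∑ l, B k l * c l * (w l - 1)

def nullMax [NeZero q] (w : Fin q → ℝ) : ℝ :=
  univ.sup' univ_nonempty (nullDiag B c w)

lemma lmaxR_nullMatrix [NeZero q] (w : Fin q → ℝ) :
    lmaxR (diagonal (fun k => (w k)⁻¹) + diagonal ((B * diagonal c) *ᵥ (w - 1))) =
      nullMax B c w := by
  rw [diagonal_add, lmaxR_diagonal]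
  congr
  funext k
  simp [nullDiag, mulVec, dotProduct, mul_diagonal]

lemma nullDiag_le_nullMax [NeZero q] (w : Fin q → ℝ) (k : Fin q) :
    nullDiag B c w k ≤ nullMax B c w :=
  le_sup' _ (mem_univ k)

variable {B c}

lemma lamNull_le_nullMax [NeZero q] (hB : ∀ k l, 0 ≤ B k l) (hc : ∀ k, 0 ≤ c k)
    {w : Fin q → ℝ} (hw : ∀ k, 0 < w k) : lamNull B c ≤ nullMax B c w := by
  refine csInf_le ⟨-∑ l, B 0 l * c l, ?_⟩ ⟨w, hw, (lmaxR_nullMatrix B c w).symm⟩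
  rintro _ ⟨u, hu, rfl⟩
  rw [lmaxR_nullMatrix]
  refine le_trans ?_ (le_sup' (nullDiag B c u) (mem_univ 0))
  have : ∀ l, -(B 0 l * c l) ≤ B 0 l * c l * (u l - 1) := fun l => by
    nlinarith [mul_nonneg (mul_nonneg (hB 0 l) (hc l)) (hu l).le]
  have := Finset.sum_le_sum fun l (_ : l ∈ univ) => this l
  rw [Finset.sum_neg_distrib] at this
  unfold nullDiag
  linarith [inv_pos.mpr (hu 0)]

lemma nullDiag_update (v : Fin q → ℝ) (j : Fin q) (a : ℝ) (k : Fin q) :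
    nullDiag B c (Function.update v j a) k =
      nullDiag B c v k + ((Function.update v j a k)⁻¹ - (v k)⁻¹) +
        B k j * c j * (a - v j) := by
  have : ∑ l, B k l * c l * (Function.update v j a l - 1) =
      ∑ l, B k l * c l * (v l - 1) + B k j * c j * (a - v j) := by
    rw [← sub_eq_iff_eq_add', ← Finset.sum_sub_distrib, Finset.sum_eq_single j]
    · simp only [Function.update_self]; ring
    · intro l _ hl; simp [Function.update_of_ne hl]
    · simp
  simp only [nullDiag, this]
  ring

theorem nullDiag_eq_nullMax_of_forall_le [NeZero q] (hB : ∀ k l, 0 < B k l) (hc : ∀ k, 0 < c k)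
    {v : Fin q → ℝ} (hv : ∀ k, 0 < v k)
    (hmin : ∀ w, (∀ k, 0 < w k) → nullMax B c v ≤ nullMax B c w) (j : Fin q) :
    nullDiag B c v j = nullMax B c v := by
  by_contra hj
  set δ := nullMax B c v - nullDiag B c v j
  have hδ : 0 < δ := sub_pos.mpr <| lt_of_le_of_ne (nullDiag_le_nullMax B c v j) hj
  set a := v j / (1 + v j * δ)
  have ha : 0 < a := div_pos (hv j) (by nlinarith [hv j])
  have hav : a < v j := (div_lt_iff₀ (by nlinarith [hv j])).mpr
    (by nlinarith [mul_pos (mul_pos (hv j) (hv j)) hδ])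
  have hainv : a⁻¹ = (v j)⁻¹ + δ := by
    simp only [a, inv_div]
    field_simp [(hv j).ne']
  set w := Function.update v j a
  have hw : ∀ k, 0 < w k := fun k => by
    rcases eq_or_ne k j with rfl | hk
    · simpa [w] using ha
    · simpa [w, Function.update_of_ne hk] using hv k
  have hlt : ∀ k, nullDiag B c w k < nullMax B c v := fun k => by
    have hdec : B k j * c j * (a - v j) < 0 :=
      mul_neg_of_pos_of_neg (mul_pos (hB k j) (hc j)) (sub_neg.mpr hav)
    rw [nullDiag_update]
    rcases eq_or_ne k j with rfl | hk
    · simp only [Function.update_self, hainv]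
      linarith
    · simp only [Function.update_of_ne hk, sub_self, add_zero]
      linarith [nullDiag_le_nullMax B c v k]
  exact (hmin w hw).not_gt ((sup'_lt_iff _).mpr fun k _ => hlt k)

lemma nullDiag_midpoint_one {v : Fin q → ℝ} {k : Fin q} (hv : 0 < v k) :
    nullDiag B c (fun l => (v l + 1) / 2) k =
      (nullDiag B c v k + 1) / 2 - (v k - 1) ^ 2 / (2 * v k * (v k + 1)) := by
  have hsum : ∑ l, B k l * c l * ((v l + 1) / 2 - 1) = (∑ l, B k l * c l * (v l - 1)) / 2 := by
    rw [Finset.sum_div]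
    exact Finset.sum_congr rfl fun l _ => by ring
  simp only [nullDiag, hsum]
  field_simp
  ring

theorem eq_one_of_nullDiag_eq_one [NeZero q] (hB : ∀ k l, 0 < B k l) (hc : ∀ k, 0 < c k)
    {v : Fin q → ℝ} (hv : ∀ k, 0 < v k)
    (hmin : ∀ w, (∀ k, 0 < w k) → nullMax B c v ≤ nullMax B c w)
    (h1 : ∀ k, nullDiag B c v k = 1) : v = 1 := by
  set w := fun l => (v l + 1) / 2
  have hw : ∀ k, 0 < w k := fun k => by have := hv k; positivity
  have hgap : ∀ k, 0 ≤ (v k - 1) ^ 2 / (2 * v k * (v k + 1)) := fun k => by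
    have := hv k; positivity
  have hwle : nullMax B c w ≤ nullMax B c v := by
    have hv1 : nullMax B c v = 1 := by simp only [nullMax, h1, sup'_const]
    refine sup'_le _ _ fun k _ => ?_
    rw [nullDiag_midpoint_one (hv k), h1, hv1]
    linarith [hgap k]
  have hwmin : ∀ u, (∀ k, 0 < u k) → nullMax B c w ≤ nullMax B c u :=
    fun u hu => hwle.trans (hmin u hu)
  funext k
  by_contra hk
  have hwk := nullDiag_eq_nullMax_of_forall_le hB hc hw hwmin k
  rw [nullDiag_midpoint_one (hv k), h1] at hwk
  have : 0 < (v k - 1) ^ 2 / (2 * v k * (v k + 1)) := by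
    have := hv k; have := sub_ne_zero.mpr hk; positivity
  linarith [hmin w hw, h1 k, nullDiag_le_nullMax B c v k]

end NullObjective

section Boundary

variable {q : ℕ}

def boundaryMatrix (B : Matrix (Fin q) (Fin q) ℝ) (c v : Fin q → ℝ) :
    Matrix (Fin q) (Fin q) ℝ :=
  diagonal (fun k => Real.sqrt (c k)) * B * diagonal (fun k => Real.sqrt (c k)) -
    diagonal (fun k => (v k)⁻¹)

variable {B : Matrix (Fin q) (Fin q) ℝ} {c v : Fin q → ℝ}

lemma boundaryMatrix_isSymm (hB : B.IsSymm) : (boundaryMatrix B c v).IsSymm := by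
  refine IsSymm.sub ?_ (isSymm_diagonal _)
  simp [IsSymm, transpose_mul, hB.eq, Matrix.mul_assoc]

lemma boundaryMatrix_apply_of_ne {k l : Fin q} (hkl : k ≠ l) :
    boundaryMatrix B c v k l = Real.sqrt (c k) * B k l * Real.sqrt (c l) := by
  simp [boundaryMatrix, diagonal_apply_ne _ hkl, mul_diagonal, diagonal_mul]

lemma boundaryMatrix_mulVec (hc : ∀ k, 0 ≤ c k) (hv : ∀ k, v k ≠ 0) :
    boundaryMatrix B c v *ᵥ (fun k => Real.sqrt (c k) * (v k - 1)) =
      fun k => Real.sqrt (c k) * (nullDiag B c v k - 1) := by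
  have hDx : diagonal (fun k => Real.sqrt (c k)) *ᵥ (fun k => Real.sqrt (c k) * (v k - 1)) =
      fun l => c l * (v l - 1) := by
    funext l
    rw [mulVec_diagonal, ← mul_assoc, Real.mul_self_sqrt (hc l)]
  funext k
  rw [boundaryMatrix, sub_mulVec, ← mulVec_mulVec, ← mulVec_mulVec, hDx]
  simp only [Pi.sub_apply, mulVec_diagonal]
  simp only [nullDiag, mulVec, dotProduct, mul_assoc]
  field_simp [hv k]
  ring

end Boundary

/-- Lemma: on the phase boundary the minimizer of λ_∅ is the
all-ones vector. -/
theorem phase_boundary_minimizer {q : ℕ} (hq : 0 < q)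
    (B : Matrix (Fin q) (Fin q) ℝ) (hBsym : B.IsSymm) (hBpos : ∀ k l, 0 < B k l)
    (c : Fin q → ℝ) (hc : ∀ k, 0 < c k)
    (v : Fin q → ℝ) (hv : ∀ k, 0 < v k)
    (hmin : lmaxR (Matrix.diagonal (fun k => (v k)⁻¹) +
      Matrix.diagonal ((B * Matrix.diagonal c).mulVec (v - 1))) = lamNull B c)
    (hzero : lmaxR (Matrix.diagonal (fun k => Real.sqrt (c k)) * B *
        Matrix.diagonal (fun k => Real.sqrt (c k)) -
      Matrix.diagonal (fun k => (v k)⁻¹)) = 0) :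
    v = 1 := by
  have : NeZero q := ⟨hq.ne'⟩
  have hvmin : ∀ w, (∀ k, 0 < w k) → nullMax B c v ≤ nullMax B c w := fun w hw => by
    rw [← lmaxR_nullMatrix, hmin]
    exact lamNull_le_nullMax (fun k l => (hBpos k l).le) (fun k => (hc k).le) hw
  have hactive := nullDiag_eq_nullMax_of_forall_le hBpos hc hv hvmin
  have hmax : nullMax B c v = 1 := by
    have hx : boundaryMatrix B c v *ᵥ (fun k => Real.sqrt (c k) * (v k - 1)) =
        (nullMax B c v - 1) • fun k => Real.sqrt (c k) := by
      rw [boundaryMatrix_mulVec (fun k => (hc k).le) (fun k => (hv k).ne')]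
      funext k
      simp [hactive k, mul_comm]
    have hoff : ∀ k l, k ≠ l → 0 ≤ boundaryMatrix B c v k l := fun k l hkl => by
      rw [boundaryMatrix_apply_of_ne hkl]; have := hBpos k l; positivity
    exact sub_eq_zero.mp <| eq_zero_of_mulVec_eq_smul_of_lmaxR_eq_zero
      (boundaryMatrix_isSymm hBsym) hoff hzero (fun k => Real.sqrt_pos.mpr (hc k)) hx
  exact eq_one_of_nullDiag_eq_one hBpos hc hv hvmin fun k => (hactive k).trans hmax
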